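/- arXiv:2506.19008 — 3 statements merged into one kernel-verified Lean document; each statement's English description precedes it below -/
import Mathlib

section
/- Deterministic comparison lemma for last-passage percolation with boundary (Lemma 1): Let M and M' be two nondecreasing boundary functions, let a < b be reals and t > 0, and suppose the last-passage times L^M_t(x), L^{M'}_t(x) are finite with attained suprema and rightmost exit points Z^M_t(x), Z^{M'}_t(x) for all x ∈ [a,b]. If Z^M_t(b) ≤ Z^{M'}_t(a), then for all x, y ∈ [a,b] with x < y, L^M_t(y) − L^M_t(x) ≤ L^{M'}_t(y) − L^{M'}_t(x). -/
open Set

/-- `lppCount ω z s x t` is the maximal number of points of `ω` in the rectangle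
`(z,x] × (s,t]` forming a strictly increasing chain. -/
noncomputable def lppCount (ω : Set (ℝ × ℝ)) (z s x t : ℝ) : ℕ :=
  sSup {k : ℕ | ∃ c : Fin k → ℝ × ℝ,
    (∀ i, c i ∈ ω ∧ z < (c i).1 ∧ (c i).1 ≤ x ∧ s < (c i).2 ∧ (c i).2 ≤ t) ∧
    ∀ i j : Fin k, i < j → (c i).1 < (c j).1 ∧ (c i).2 < (c j).2}

/-- Last-passage time with boundary function `M`:
`L^M_t(x) = sup { M(z) + L((z,0),(x,t)) : z ≤ x }`. -/
noncomputable def lppBoundary (ω : Set (ℝ × ℝ)) (M : ℝ → ℝ) (t x : ℝ) : ℝ :=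
  sSup {v : ℝ | ∃ z ≤ x, v = M z + (lppCount ω z 0 x t : ℝ)}

/-- Rightmost exit point:
`Z^M_t(x) = sup { z ≤ x : L^M_t(x) = M(z) + L((z,0),(x,t)) }`. -/
noncomputable def lppExitPoint (ω : Set (ℝ × ℝ)) (M : ℝ → ℝ) (t x : ℝ) : ℝ :=
  sSup {z : ℝ | z ≤ x ∧ lppBoundary ω M t x = M z + (lppCount ω z 0 x t : ℝ)}

def lppChainSet (ω : Set (ℝ × ℝ)) (z s x t : ℝ) : Set ℕ :=
  {k : ℕ | ∃ c : Fin k → ℝ × ℝ,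
    (∀ i, c i ∈ ω ∧ z < (c i).1 ∧ (c i).1 ≤ x ∧ s < (c i).2 ∧ (c i).2 ≤ t) ∧
    ∀ i j : Fin k, i < j → (c i).1 < (c j).1 ∧ (c i).2 < (c j).2}

lemma lppCount_eq (ω : Set (ℝ × ℝ)) (z s x t : ℝ) :
    lppCount ω z s x t = sSup (lppChainSet ω z s x t) := rfl

lemma lppChainSet_zero_mem (ω : Set (ℝ × ℝ)) (z s x t : ℝ) :
    0 ∈ lppChainSet ω z s x t :=
  ⟨fun i => i.elim0, fun i => i.elim0, fun i => i.elim0⟩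

lemma lppChainSet_bddAbove (ω : Set (ℝ × ℝ)) (z s x t : ℝ)
    (hfin : (ω ∩ {p : ℝ × ℝ | z < p.1 ∧ p.1 ≤ x ∧ s < p.2 ∧ p.2 ≤ t}).Finite) :
    BddAbove (lppChainSet ω z s x t) := by
  classical
  refine ⟨hfin.toFinset.card, fun k hk => ?_⟩
  obtain ⟨c, hc, hmono⟩ := hk
  have hmem : ∀ i, c i ∈ hfin.toFinset := by
    intro i
    rw [Set.Finite.mem_toFinset]
    exact ⟨(hc i).1, (hc i).2.1, (hc i).2.2.1, (hc i).2.2.2.1, (hc i).2.2.2.2⟩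
  have hinj : Function.Injective fun i : Fin k => (⟨c i, hmem i⟩ : {q // q ∈ hfin.toFinset}) := by
    intro i j hij
    simp only [Subtype.mk.injEq] at hij
    rcases lt_trichotomy i j with h | h | h
    · exact absurd ((hmono i j h).1) (by rw [hij]; exact lt_irrefl _)
    · exact h
    · exact absurd ((hmono j i h).1) (by rw [hij]; exact lt_irrefl _)
  calc k = Fintype.card (Fin k) := (Fintype.card_fin k).symm
    _ ≤ Fintype.card {q // q ∈ hfin.toFinset} := Fintype.card_le_of_injective _ hinj
    _ = hfin.toFinset.card := Fintype.card_coe _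

lemma le_lppCount (ω : Set (ℝ × ℝ)) (z s x t : ℝ)
    (hfin : (ω ∩ {p : ℝ × ℝ | z < p.1 ∧ p.1 ≤ x ∧ s < p.2 ∧ p.2 ≤ t}).Finite)
    {k : ℕ} (hk : k ∈ lppChainSet ω z s x t) : k ≤ lppCount ω z s x t :=
  le_csSup (lppChainSet_bddAbove ω z s x t hfin) hk

lemma lppCount_mem (ω : Set (ℝ × ℝ)) (z s x t : ℝ)
    (hfin : (ω ∩ {p : ℝ × ℝ | z < p.1 ∧ p.1 ≤ x ∧ s < p.2 ∧ p.2 ≤ t}).Finite) :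
    lppCount ω z s x t ∈ lppChainSet ω z s x t :=
  Nat.sSup_mem ⟨0, lppChainSet_zero_mem ω z s x t⟩ (lppChainSet_bddAbove ω z s x t hfin)

/-- Splitting lemma: given a chain in `(z1,x2]` and a chain in `(z2,x1]`
(with `z1 ≤ z2 ≤ x1 ≤ x2`), one can produce chains in `(z1,x1]` and `(z2,x2]`
of the same total length. -/
lemma lpp_chain_split (ω : Set (ℝ × ℝ)) (z1 z2 x1 x2 t : ℝ)
    (h12 : z1 ≤ z2) (h2x : z2 ≤ x1) (hx : x1 ≤ x2)
    {k1 k2 : ℕ} (p : Fin k1 → ℝ × ℝ) (d : Fin k2 → ℝ × ℝ)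
    (hp : ∀ i, p i ∈ ω ∧ z1 < (p i).1 ∧ (p i).1 ≤ x2 ∧ 0 < (p i).2 ∧ (p i).2 ≤ t)
    (hpm : ∀ i j : Fin k1, i < j → (p i).1 < (p j).1 ∧ (p i).2 < (p j).2)
    (hd : ∀ l, d l ∈ ω ∧ z2 < (d l).1 ∧ (d l).1 ≤ x1 ∧ 0 < (d l).2 ∧ (d l).2 ≤ t)
    (hdm : ∀ i j : Fin k2, i < j → (d i).1 < (d j).1 ∧ (d i).2 < (d j).2) :
    ∃ n1 n2 : ℕ, n1 + n2 = k1 + k2 ∧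
      n1 ∈ lppChainSet ω z1 0 x1 t ∧ n2 ∈ lppChainSet ω z2 0 x2 t := by
  classical
  by_cases hex : ∃ i : ℕ, ∃ h : i < k1, z2 < (p ⟨i, h⟩).1 ∧
      ∀ l : Fin k2, (d l).2 ≤ (p ⟨i, h⟩).2 → (d l).1 < (p ⟨i, h⟩).1
  · -- crossing exists
    set i0 := Nat.find hex with hi0def
    obtain ⟨hik1, hP1, hP2⟩ := Nat.find_spec hex
    have hmin : ∀ i (h : i < k1), i < i0 →
        (p ⟨i, h⟩).1 ≤ z2 ∨ ∃ l : Fin k2, (d l).2 ≤ (p ⟨i, h⟩).2 ∧ (p ⟨i, h⟩).1 ≤ (d l).1 := by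
      intro i h hi
      have := Nat.find_min hex hi
      push_neg at this
      rcases le_or_gt (p ⟨i, h⟩).1 z2 with h' | h'
      · exact Or.inl h'
      · obtain ⟨l, hl1, hl2⟩ := this h h'
        exact Or.inr ⟨l, hl1, hl2⟩
    set θ := (p ⟨i0, hik1⟩).2 with hθdef
    have hmex : ∃ l : ℕ, ∀ h : l < k2, θ ≤ (d ⟨l, h⟩).2 := ⟨k2, fun h => absurd h (lt_irrefl _)⟩
    set m := Nat.find hmex with hmdef
    have hmk2 : m ≤ k2 := Nat.find_le (fun h => absurd h (lt_irrefl _))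
    have hm2 : ∀ l (h : l < k2), m ≤ l → θ ≤ (d ⟨l, h⟩).2 := by
      intro l h hml
      have hmk : m < k2 := lt_of_le_of_lt hml h
      have := Nat.find_spec hmex hmk
      rcases eq_or_lt_of_le hml with rfl | hlt
      · exact this
      · exact this.trans (le_of_lt (hdm ⟨m, hmk⟩ ⟨l, h⟩ (Fin.mk_lt_mk.mpr hlt)).2)
    have hm1 : ∀ l (h : l < k2), l < m → (d ⟨l, h⟩).2 < θ := by
      intro l h hlm
      have := Nat.find_min hmex hlm
      push_neg at this
      obtain ⟨h', hlt⟩ := this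
      exact hlt
    -- key bounds for indices < i0
    have hlow : ∀ i (h : i < k1), i < i0 → (p ⟨i, h⟩).1 ≤ x1 := by
      intro i h hi
      rcases hmin i h hi with h' | ⟨l, _, h'⟩
      · exact h'.trans h2x
      · exact h'.trans (hd l).2.2.1
    -- across for chain A: p-part then d-part
    have hacrossA : ∀ i (hi : i < k1), i < i0 → ∀ l (hl : l < k2), m ≤ l →
        (p ⟨i, hi⟩).1 < (d ⟨l, hl⟩).1 ∧ (p ⟨i, hi⟩).2 < (d ⟨l, hl⟩).2 := by
      intro i hi hii0 l hl hml
      constructor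
      · rcases hmin i hi hii0 with h' | ⟨l0, hl01, hl02⟩
        · exact lt_of_le_of_lt h' (hd ⟨l, hl⟩).2.1
        · have hl0m : (l0 : ℕ) < m := by
            by_contra hcon
            push_neg at hcon
            have := hm2 l0 l0.isLt hcon
            have htime : (d l0).2 < θ := by
              have hpi : (p ⟨i, hi⟩).2 < θ := (hpm ⟨i, hi⟩ ⟨i0, hik1⟩ hii0).2
              exact lt_of_le_of_lt hl01 hpi
            exact absurd htime (not_lt.mpr this)
          have : (d l0).1 < (d ⟨l, hl⟩).1 := (hdm l0 ⟨l, hl⟩ (Fin.lt_def.mpr (lt_of_lt_of_le hl0m hml))).1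
          exact lt_of_le_of_lt hl02 this
      · have h1 : (p ⟨i, hi⟩).2 < θ := (hpm ⟨i, hi⟩ ⟨i0, hik1⟩ hii0).2
        exact lt_of_lt_of_le h1 (hm2 l hl hml)
    -- across for chain B: d-part then p-part
    have hacrossB : ∀ l (hl : l < k2), l < m → ∀ i (hi : i < k1), i0 ≤ i →
        (d ⟨l, hl⟩).1 < (p ⟨i, hi⟩).1 ∧ (d ⟨l, hl⟩).2 < (p ⟨i, hi⟩).2 := by
      intro l hl hlm i hi hi0i
      have hdθ : (d ⟨l, hl⟩).2 < θ := hm1 l hl hlm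
      have hd1 : (d ⟨l, hl⟩).1 < (p ⟨i0, hik1⟩).1 := hP2 _ (le_of_lt hdθ)
      rcases eq_or_lt_of_le hi0i with heq | hlt
      · have he : (⟨i0, hik1⟩ : Fin k1) = ⟨i, hi⟩ := Fin.ext heq
        exact ⟨he ▸ hd1, he ▸ hdθ⟩
      · have h2 := hpm ⟨i0, hik1⟩ ⟨i, hi⟩ hlt
        exact ⟨hd1.trans h2.1, hdθ.trans h2.2⟩
    refine ⟨i0 + (k2 - m), m + (k1 - i0), by omega, ?_, ?_⟩
    · -- chain A in (z1, x1]
      refine ⟨fun l => if h : (l : ℕ) < i0 then p ⟨l, h.trans hik1⟩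
          else d ⟨m + ((l : ℕ) - i0), by have := l.isLt; omega⟩, ?_, ?_⟩
      · intro i
        by_cases h : (i : ℕ) < i0
        · simp only [dif_pos h]
          have h' := hp ⟨i, h.trans hik1⟩
          exact ⟨h'.1, h'.2.1, hlow i (h.trans hik1) h, h'.2.2.2.1, h'.2.2.2.2⟩
        · simp only [dif_neg h]
          have h' := hd ⟨m + ((i : ℕ) - i0), by have := i.isLt; omega⟩
          exact ⟨h'.1, lt_of_le_of_lt h12 h'.2.1, h'.2.2.1, h'.2.2.2.1, h'.2.2.2.2⟩
      · intro i j hij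
        by_cases hi : (i : ℕ) < i0 <;> by_cases hj : (j : ℕ) < i0
        · simp only [dif_pos hi, dif_pos hj]
          exact hpm _ _ (by exact hij)
        · simp only [dif_pos hi, dif_neg hj]
          exact hacrossA i (hi.trans hik1) hi _ _ (by omega)
        · omega
        · simp only [dif_neg hi, dif_neg hj]
          exact hdm _ _ (by simp only [Fin.mk_lt_mk]; omega)
    · -- chain B in (z2, x2]
      refine ⟨fun l => if h : (l : ℕ) < m then d ⟨l, h.trans_le hmk2⟩
          else p ⟨i0 + ((l : ℕ) - m), by have := l.isLt; omega⟩, ?_, ?_⟩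
      · intro i
        by_cases h : (i : ℕ) < m
        · simp only [dif_pos h]
          have h' := hd ⟨i, h.trans_le hmk2⟩
          exact ⟨h'.1, h'.2.1, h'.2.2.1.trans hx, h'.2.2.2.1, h'.2.2.2.2⟩
        · simp only [dif_neg h]
          have hi' : i0 + ((i : ℕ) - m) < k1 := by have := i.isLt; omega
          have h' := hp ⟨i0 + ((i : ℕ) - m), hi'⟩
          have hz2 : z2 < (p ⟨i0 + ((i : ℕ) - m), hi'⟩).1 := by
            rcases Nat.eq_or_lt_of_le (Nat.le_add_right i0 ((i : ℕ) - m)) with heq | hlt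
            · have he : (⟨i0 + ((i:ℕ) - m), hi'⟩ : Fin k1) = ⟨i0, hik1⟩ := Fin.ext heq.symm
              rw [he]; exact hP1
            · exact hP1.trans (hpm ⟨i0, hik1⟩ _ (Fin.mk_lt_mk.mpr hlt)).1
          exact ⟨h'.1, hz2, h'.2.2.1, h'.2.2.2.1, h'.2.2.2.2⟩
      · intro i j hij
        by_cases hi : (i : ℕ) < m <;> by_cases hj : (j : ℕ) < m
        · simp only [dif_pos hi, dif_pos hj]
          exact hdm _ _ (by exact hij)
        · simp only [dif_pos hi, dif_neg hj]
          exact hacrossB i (hi.trans_le hmk2) hi _ _ (by omega)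
        · omega
        · simp only [dif_neg hi, dif_neg hj]
          exact hpm _ _ (by simp only [Fin.mk_lt_mk]; omega)
  · -- no crossing: every p has first coordinate ≤ x1
    push_neg at hex
    refine ⟨k1, k2, rfl, ⟨p, ?_, hpm⟩, ⟨d, ?_, hdm⟩⟩
    · intro i
      have h' := hp i
      have hx1 : (p i).1 ≤ x1 := by
        rcases le_or_gt (p i).1 z2 with hle | hgt
        · exact hle.trans h2x
        · have hei : (⟨(i : ℕ), i.isLt⟩ : Fin k1) = i := Fin.ext rfl
          obtain ⟨l, _, hl2⟩ := hex i i.isLt (by rw [hei]; exact hgt)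
          rw [hei] at hl2
          exact hl2.trans (hd l).2.2.1
      exact ⟨h'.1, h'.2.1, hx1, h'.2.2.2.1, h'.2.2.2.2⟩
    · intro l
      have h' := hd l
      exact ⟨h'.1, h'.2.1, h'.2.2.1.trans hx, h'.2.2.2.1, h'.2.2.2.2⟩

/-- Quadrangle (crossing) inequality for `lppCount`. -/
lemma lppCount_crossing (ω : Set (ℝ × ℝ))
    (hωfin : ∀ z s x t : ℝ,
      (ω ∩ {p : ℝ × ℝ | z < p.1 ∧ p.1 ≤ x ∧ s < p.2 ∧ p.2 ≤ t}).Finite)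
    (z1 z2 x1 x2 t : ℝ) (h12 : z1 ≤ z2) (h2x : z2 ≤ x1) (hx : x1 ≤ x2) :
    lppCount ω z1 0 x2 t + lppCount ω z2 0 x1 t ≤
      lppCount ω z1 0 x1 t + lppCount ω z2 0 x2 t := by
  obtain ⟨p, hp, hpm⟩ := lppCount_mem ω z1 0 x2 t (hωfin z1 0 x2 t)
  obtain ⟨d, hd, hdm⟩ := lppCount_mem ω z2 0 x1 t (hωfin z2 0 x1 t)
  obtain ⟨n1, n2, hsum, hn1, hn2⟩ :=
    lpp_chain_split ω z1 z2 x1 x2 t h12 h2x hx p d hp hpm hd hdm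
  calc lppCount ω z1 0 x2 t + lppCount ω z2 0 x1 t = n1 + n2 := hsum.symm
    _ ≤ _ := Nat.add_le_add (le_lppCount ω z1 0 x1 t (hωfin _ _ _ _) hn1)
        (le_lppCount ω z2 0 x2 t (hωfin _ _ _ _) hn2)

/-- Deterministic comparison lemma for last-passage percolation with boundary
(Lemma 1): if the rightmost exit point of `b` for boundary `M` lies to the left of the
rightmost exit point of `a` for boundary `M'`, then the increments of `L^M_t` on `[a,b]`
are dominated by those of `L^{M'}_t`. -/
theorem lpp_comparison (ω : Set (ℝ × ℝ)) (hω : ω ⊆ {p : ℝ × ℝ | 0 < p.2})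
    (hωfin : ∀ z s x t : ℝ,
      (ω ∩ {p : ℝ × ℝ | z < p.1 ∧ p.1 ≤ x ∧ s < p.2 ∧ p.2 ≤ t}).Finite)
    (M M' : ℝ → ℝ) (hM : Monotone M) (hM' : Monotone M')
    (a b t : ℝ) (hab : a < b) (ht : 0 < t)
    -- the suprema defining the last-passage times are finite and attained on `[a,b]`,
    -- and the rightmost exit points themselves realize the suprema
    (hbdd : ∀ N ∈ ({M, M'} : Set (ℝ → ℝ)), ∀ x ∈ Icc a b,
      BddAbove {v : ℝ | ∃ z ≤ x, v = N z + (lppCount ω z 0 x t : ℝ)})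
    (hatt : ∀ N ∈ ({M, M'} : Set (ℝ → ℝ)), ∀ x ∈ Icc a b,
      lppExitPoint ω N t x ≤ x ∧
        lppBoundary ω N t x =
          N (lppExitPoint ω N t x) +
            (lppCount ω (lppExitPoint ω N t x) 0 x t : ℝ))
    (hZ : lppExitPoint ω M t b ≤ lppExitPoint ω M' t a) :
    ∀ x ∈ Icc a b, ∀ y ∈ Icc a b, x < y →
      lppBoundary ω M t y - lppBoundary ω M t x ≤
        lppBoundary ω M' t y - lppBoundary ω M' t x := by
  intro x hx y hy hxy
  have hmemM : M ∈ ({M, M'} : Set (ℝ → ℝ)) := Set.mem_insert _ _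
  have hmemM' : M' ∈ ({M, M'} : Set (ℝ → ℝ)) := Set.mem_insert_iff.mpr (Or.inr rfl)
  have haI : a ∈ Icc a b := ⟨le_refl a, le_of_lt hab⟩
  have hbI : b ∈ Icc a b := ⟨le_of_lt hab, le_refl b⟩
  -- candidate inequality
  have cand : ∀ N ∈ ({M, M'} : Set (ℝ → ℝ)), ∀ u ∈ Icc a b, ∀ z, z ≤ u →
      N z + (lppCount ω z 0 u t : ℝ) ≤ lppBoundary ω N t u := by
    intro N hN u hu z hz
    exact le_csSup (hbdd N hN u hu) ⟨z, hz, rfl⟩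
  -- crossing inequality, cast to ℝ
  have cross : ∀ z1 z2 x1 x2 : ℝ, z1 ≤ z2 → z2 ≤ x1 → x1 ≤ x2 →
      (lppCount ω z1 0 x2 t : ℝ) + (lppCount ω z2 0 x1 t : ℝ) ≤
        (lppCount ω z1 0 x1 t : ℝ) + (lppCount ω z2 0 x2 t : ℝ) := by
    intro z1 z2 x1 x2 h1 h2 h3
    exact_mod_cast lppCount_crossing ω hωfin z1 z2 x1 x2 t h1 h2 h3
  set zb := lppExitPoint ω M t b with hzb
  set zy := lppExitPoint ω M t y with hzy
  set za := lppExitPoint ω M' t a with hza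
  set zx := lppExitPoint ω M' t x with hzx
  obtain ⟨hzb_le, hzb_eq⟩ := hatt M hmemM b hbI
  obtain ⟨hzy_le, hzy_eq⟩ := hatt M hmemM y hy
  obtain ⟨hza_le, hza_eq⟩ := hatt M' hmemM' a haI
  obtain ⟨hzx_le, hzx_eq⟩ := hatt M' hmemM' x hx
  have hax : a ≤ x := hx.1
  have hyb : y ≤ b := hy.2
  have hzba : zb ≤ a := hZ.trans hza_le
  -- Step 1 : an optimizer ζ for L^M at y with ζ ≤ zb
  obtain ⟨ζ, hζzb, hζy, hζeq⟩ : ∃ ζ, ζ ≤ zb ∧ ζ ≤ y ∧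
      lppBoundary ω M t y = M ζ + (lppCount ω ζ 0 y t : ℝ) := by
    rcases le_or_gt zy zb with hcase | hcase
    · exact ⟨zy, hcase, hzy_le, hzy_eq⟩
    · refine ⟨zb, le_refl zb, hzba.trans (hax.trans (le_of_lt hxy)), ?_⟩
      have hcr := cross zb zy y b (le_of_lt hcase) hzy_le hyb
      have h1 : M zy + (lppCount ω zy 0 b t : ℝ) ≤ lppBoundary ω M t b :=
        cand M hmemM b hbI zy (hzy_le.trans hyb)
      have h2 : M zb + (lppCount ω zb 0 y t : ℝ) ≤ lppBoundary ω M t y :=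
        cand M hmemM y hy zb (hzba.trans (hax.trans (le_of_lt hxy)))
      have h3 : lppBoundary ω M t y ≤ M zb + (lppCount ω zb 0 y t : ℝ) := by
        rw [hzy_eq]; linarith [hzb_eq]
      linarith
  -- Step 2 : an optimizer ζ' for L^{M'} at x with zb ≤ ζ'
  obtain ⟨ζ', hζ'zb, hζ'x, hζ'eq⟩ : ∃ ζ', zb ≤ ζ' ∧ ζ' ≤ x ∧
      lppBoundary ω M' t x = M' ζ' + (lppCount ω ζ' 0 x t : ℝ) := by
    rcases le_or_gt za zx with hcase | hcase
    · exact ⟨zx, hZ.trans hcase, hzx_le, hzx_eq⟩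
    · refine ⟨za, hZ, hza_le.trans hax, ?_⟩
      have hcr := cross zx za a x (le_of_lt hcase) hza_le hax
      have h1 : M' zx + (lppCount ω zx 0 a t : ℝ) ≤ lppBoundary ω M' t a :=
        cand M' hmemM' a haI zx ((le_of_lt hcase).trans hza_le)
      have h2 : M' za + (lppCount ω za 0 x t : ℝ) ≤ lppBoundary ω M' t x :=
        cand M' hmemM' x hx za (hza_le.trans hax)
      have h3 : lppBoundary ω M' t x ≤ M' za + (lppCount ω za 0 x t : ℝ) := by
        rw [hzx_eq]; linarith [hza_eq]
      linarith
  -- Step 3 : conclude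
  have hζx : ζ ≤ x := hζzb.trans (hzba.trans hax)
  have hζζ' : ζ ≤ ζ' := hζzb.trans hζ'zb
  have hLMx : M ζ + (lppCount ω ζ 0 x t : ℝ) ≤ lppBoundary ω M t x :=
    cand M hmemM x hx ζ hζx
  have hLM'y : M' ζ' + (lppCount ω ζ' 0 y t : ℝ) ≤ lppBoundary ω M' t y :=
    cand M' hmemM' y hy ζ' (hζ'x.trans (le_of_lt hxy))
  have hcr := cross ζ ζ' x y hζζ' hζ'x (le_of_lt hxy)
  linarith [hζeq, hζ'eq]
end

section
/- Mean-gap optimization inequality: For all reals t > 0 and u with 0 < u ≤ (3/4)·t, setting λ = (1 − u/t)^{−1/2}, one has (λ − 1)·u − t·(λ + 1/λ − 2) ≥ u²/(4t). -/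
open Real

/-- Mean-gap optimization inequality: for all reals `t > 0` and `0 < u ≤ (3/4)t`,
setting `λ = (1 − u/t)^{−1/2}`, one has `(λ − 1)u − t(λ + 1/λ − 2) ≥ u²/(4t)`. -/
theorem mean_gap_optimization (t u : ℝ) (ht : 0 < t) (hu : 0 < u) (hut : u ≤ 3 / 4 * t) :
    ((1 - u / t) ^ (-(1 / 2 : ℝ)) - 1) * u -
        t * ((1 - u / t) ^ (-(1 / 2 : ℝ)) + 1 / (1 - u / t) ^ (-(1 / 2 : ℝ)) - 2) ≥
      u ^ 2 / (4 * t) := by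
  have hut' : u < t := lt_of_le_of_lt hut (by linarith)
  have hs : 0 < 1 - u / t := by
    have : u / t < 1 := (div_lt_one ht).mpr hut'
    linarith
  have key : (1 - u / t) ^ (-(1 / 2 : ℝ)) = (Real.sqrt (1 - u / t))⁻¹ := by
    rw [Real.rpow_neg hs.le, ← Real.sqrt_eq_rpow]
  set r := Real.sqrt (1 - u / t) with hrdef
  have hr : 0 < r := Real.sqrt_pos.mpr hs
  have hr2 : r ^ 2 = 1 - u / t := Real.sq_sqrt hs.le
  have hr1 : r ≤ 1 := by
    rw [hrdef]
    have : (1 : ℝ) = Real.sqrt 1 := (Real.sqrt_one).symm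
    rw [this]
    apply Real.sqrt_le_sqrt
    have : 0 < u / t := div_pos hu ht
    linarith
  have hu_eq : u = t * (1 - r ^ 2) := by
    rw [hr2]; field_simp; ring
  rw [key, hu_eq]
  rw [ge_iff_le, div_le_iff₀ (by positivity)]
  have hexp : ((r⁻¹ - 1) * (t * (1 - r ^ 2)) - t * (r⁻¹ + 1 / r⁻¹ - 2))
      = t * (1 - r) ^ 2 := by
    field_simp
    ring
  rw [hexp]
  nlinarith [mul_pos ht ht, sq_nonneg t,
    mul_nonneg (mul_pos ht ht).le
      (mul_nonneg (mul_nonneg (sq_nonneg (1 - r)) (by linarith : (0:ℝ) ≤ 1 - r))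
        (by linarith : (0:ℝ) ≤ 3 + r))]
end

section
/- Arithmetic induction step of the multiscale scheme (core of the proof of Theorem 5): Let (l_n)_{n≥0}, (p_n)_{n≥0}, (H_n)_{n≥0} be sequences of nonnegative reals with l_n ≥ 1, and let k ≥ 1. Assume that for all n ≥ k: p_{n+1} ≤ 100·l_{n−1}·(p_n² + H_n), l_{n−1} ≤ l_n, l_{n+1} ≤ l_n^{3/2}, and 100·l_n^{−1} + 100·l_n⁷·H_n ≤ 1. If p_k ≤ l_k^{−4}, then p_n ≤ l_n^{−4} for all n ≥ k. -/
lemma multiscale_key (x Hn pn Q P : ℝ) (hx : 1 ≤ x) (hHn : 0 ≤ Hn) (hpn : 0 ≤ pn)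
    (hP0 : 0 ≤ P) (hP : P ≤ x) (hpn4 : pn ≤ (x ^ 4)⁻¹) (hQ : 1 ≤ Q) (hQx : Q ≤ x ^ 6)
    (hs : 100 * x⁻¹ + 100 * x ^ 7 * Hn ≤ 1) :
    100 * P * (pn ^ 2 + Hn) ≤ Q⁻¹ := by
  have hx0 : (0:ℝ) < x := lt_of_lt_of_le one_pos hx
  have hQ0 : (0:ℝ) < Q := lt_of_lt_of_le one_pos hQ
  have h1 : 100 * P * (pn ^ 2 + Hn) ≤ 100 * x * (((x ^ 4)⁻¹) ^ 2 + Hn) := by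
    have hsq : pn ^ 2 ≤ ((x ^ 4)⁻¹) ^ 2 := by
      apply pow_le_pow_left₀ hpn hpn4
    have : (0:ℝ) ≤ pn ^ 2 + Hn := by positivity
    nlinarith
  have h2 : 100 * x * (((x ^ 4)⁻¹) ^ 2 + Hn) ≤ (x ^ 6)⁻¹ := by
    rw [show (x ^ 6)⁻¹ = 1 / x ^ 6 from (one_div _).symm, le_div_iff₀ (by positivity)]
    have hinv : (x ^ 4)⁻¹ * x ^ 4 = 1 := inv_mul_cancel₀ (by positivity)
    have hs' : 100 + 100 * x ^ 8 * Hn ≤ x := by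
      have := mul_le_mul_of_nonneg_right hs (le_of_lt hx0)
      have hxi : x⁻¹ * x = 1 := inv_mul_cancel₀ (ne_of_gt hx0)
      nlinarith
    nlinarith [sq_nonneg ((x^4)⁻¹), pow_pos hx0 8, mul_pos hx0 hx0]
  have h3 : (x ^ 6)⁻¹ ≤ Q⁻¹ := by
    apply inv_anti₀ hQ0 hQx
  linarith

/-- Arithmetic induction step of the multiscale scheme (core of the proof of Theorem 5):
if for all `n ≥ k` we have `p_{n+1} ≤ 100 l_{n−1} (p_n² + H_n)`, `l_{n−1} ≤ l_n`,
`l_{n+1} ≤ l_n^{3/2}` and `100 l_n⁻¹ + 100 l_n⁷ H_n ≤ 1`, with all quantities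
nonnegative and `l_n ≥ 1`, then `p_k ≤ l_k⁻⁴` implies `p_n ≤ l_n⁻⁴` for all `n ≥ k`. -/
theorem multiscale_induction_step (l p H : ℕ → ℝ) (hl : ∀ n, 1 ≤ l n)
    (hp : ∀ n, 0 ≤ p n) (hH : ∀ n, 0 ≤ H n) (k : ℕ) (hk : 1 ≤ k)
    (hrec : ∀ n ≥ k, p (n + 1) ≤ 100 * l (n - 1) * ((p n) ^ 2 + H n))
    (hmono : ∀ n ≥ k, l (n - 1) ≤ l n)
    (hgrow : ∀ n ≥ k, l (n + 1) ≤ (l n) ^ ((3 : ℝ) / 2))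
    (hsmall : ∀ n ≥ k, 100 * (l n)⁻¹ + 100 * (l n) ^ 7 * H n ≤ 1)
    (htrig : p k ≤ (l k) ^ (-(4 : ℝ))) :
    ∀ n ≥ k, p n ≤ (l n) ^ (-(4 : ℝ)) := by
  have hpos : ∀ n, (0:ℝ) < l n := fun n => lt_of_lt_of_le one_pos (hl n)
  have hrw : ∀ n, (l n) ^ (-(4:ℝ)) = ((l n) ^ (4:ℕ))⁻¹ := by
    intro n
    rw [Real.rpow_neg (le_of_lt (hpos n))]
    rw [← Real.rpow_natCast (l n) 4]; norm_num
  intro n hn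
  induction n, hn using Nat.le_induction with
  | base => exact htrig
  | succ n hn ih =>
    rw [hrw] at ih ⊢
    have hQx : (l (n+1)) ^ (4:ℕ) ≤ (l n) ^ (6:ℕ) := by
      have h1 : (l (n+1)) ^ (4:ℕ) ≤ ((l n) ^ ((3:ℝ)/2)) ^ (4:ℕ) :=
        pow_le_pow_left₀ (le_of_lt (hpos _)) (hgrow n hn) 4
      have h2 : ((l n) ^ ((3:ℝ)/2)) ^ (4:ℕ) = (l n) ^ (6:ℕ) := by
        rw [← Real.rpow_natCast ((l n) ^ ((3:ℝ)/2)) 4, ← Real.rpow_mul (le_of_lt (hpos n))]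
        rw [← Real.rpow_natCast (l n) 6]; norm_num
      linarith [h1, h2.le, h2.ge]
    calc p (n+1) ≤ 100 * l (n-1) * ((p n) ^ 2 + H n) := hrec n hn
      _ ≤ ((l (n+1)) ^ (4:ℕ))⁻¹ :=
        multiscale_key (l n) (H n) (p n) ((l (n+1)) ^ (4:ℕ)) (l (n-1)) (hl n) (hH n) (hp n)
          (le_of_lt (hpos _)) (hmono n hn) ih (one_le_pow₀ (hl (n+1))) hQx (hsmall n hn)
end
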